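/- For positive integers n and k with 1 ≤ k ≤ n, the restricted type B Eulerian polynomials satisfy B_{n+1,k}(t) = Σ_{i=1}^{n} B_{n,-i}(t) + t·Σ_{i=1}^{k-1} B_{n,i}(t) + Σ_{i=k}^{n} B_{n,i}(t), and B_{n+1,-k}(t) = t·(B_{n,-k}(t)+B_{n,-(k+1)}(t)+…+B_{n,-n}(t)) + (B_{n,-1}(t)+…+B_{n,-(k-1)}(t)) + t·(B_{n,1}(t)+…+B_{n,n}(t)). -/

import Mathlib

open Finset Polynomial

/-- A signed permutation in the hyperoctahedral group `𝔅_n` is modelled by a permutation of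
`Fin n` together with a sign vector.  `sval p i` is the value `π_i = π(i)` of the associated
bijection of `{-n,…,-1,1,…,n}` (with `π(-i) = -π(i)` and the convention `π_0 = 0`). -/
def sval {n : ℕ} (p : Equiv.Perm (Fin n) × (Fin n → Bool)) (i : ℤ) : ℤ :=
  if h : 1 ≤ i ∧ i ≤ (n : ℤ) then
    (if p.2 ⟨(i - 1).toNat, by omega⟩ then -1 else 1) *
      (((p.1 ⟨(i - 1).toNat, by omega⟩ : Fin n) : ℕ) + 1)
  else if h' : 1 ≤ -i ∧ -i ≤ (n : ℤ) then
    -((if p.2 ⟨(-i - 1).toNat, by omega⟩ then -1 else 1) *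
      (((p.1 ⟨(-i - 1).toNat, by omega⟩ : Fin n) : ℕ) + 1))
  else 0

/-- The type B descent number `des_B(π) = |{i ∈ {0,…,n-1} : π_i > π_{i+1}}|` (with `π_0 = 0`). -/
def desB {n : ℕ} (p : Equiv.Perm (Fin n) × (Fin n → Bool)) : ℕ :=
  (Finset.univ.filter (fun i : Fin n =>
    sval p (((i : ℕ) : ℤ) + 1) < sval p ((i : ℕ) : ℤ))).card

/-- The type B excedance number
`exc_B(π) = |{i ∈ [n] : π(|π(i)|) > π(i) or π(i) = -i}|`. -/
def excB {n : ℕ} (p : Equiv.Perm (Fin n) × (Fin n → Bool)) : ℕ :=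
  (Finset.univ.filter (fun i : Fin n =>
    sval p (((i : ℕ) : ℤ) + 1) < sval p |sval p (((i : ℕ) : ℤ) + 1)| ∨
      sval p (((i : ℕ) : ℤ) + 1) = -(((i : ℕ) : ℤ) + 1))).card

/-- The restricted type B Eulerian polynomial `B_{n,k}(t) = ∑_{π ∈ 𝔅_n, π_1 = k} t^{des_B(π)}`. -/
noncomputable def Bpoly (n : ℕ) (k : ℤ) : Polynomial ℚ :=
  ∑ p ∈ Finset.univ.filter
      (fun p : Equiv.Perm (Fin n) × (Fin n → Bool) => sval p 1 = k),
    Polynomial.X ^ desB p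

/-- `BE_{n,k}(t) = ∑_{π ∈ 𝔅_n, π_1 = k} t^{exc_B(π)}`. -/
noncomputable def BEpoly (n : ℕ) (k : ℤ) : Polynomial ℚ :=
  ∑ p ∈ Finset.univ.filter
      (fun p : Equiv.Perm (Fin n) × (Fin n → Bool) => sval p 1 = k),
    Polynomial.X ^ excB p

lemma sval_zero {n : ℕ} (p : Equiv.Perm (Fin n) × (Fin n → Bool)) : sval p 0 = 0 := by
  simp [sval]

lemma sval_coe_succ {n : ℕ} (p : Equiv.Perm (Fin n) × (Fin n → Bool)) (i : Fin n) :
    sval p (((i : ℕ) : ℤ) + 1) = (if p.2 i then -1 else 1) * ((p.1 i : ℕ) + 1) := by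
  have hi := i.isLt
  have h : (1:ℤ) ≤ ((i : ℕ) : ℤ) + 1 ∧ ((i : ℕ) : ℤ) + 1 ≤ (n : ℤ) := by omega
  rw [sval, dif_pos h]
  have : (⟨((((i : ℕ) : ℤ) + 1) - 1).toNat, by omega⟩ : Fin n) = i := by
    ext; simp
  rw [this]

def ins {n : ℕ} (a : Fin (n+1)) (σ : Equiv.Perm (Fin n)) : Equiv.Perm (Fin (n+1)) :=
  ((finSuccEquiv n).trans σ.optionCongr).trans (finSuccEquiv' a).symm

@[simp] lemma ins_zero {n : ℕ} (a : Fin (n+1)) (σ : Equiv.Perm (Fin n)) : ins a σ 0 = a := by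
  simp [ins]

@[simp] lemma ins_succ {n : ℕ} (a : Fin (n+1)) (σ : Equiv.Perm (Fin n)) (i : Fin n) :
    ins a σ i.succ = a.succAbove (σ i) := by
  simp [ins]

def del {n : ℕ} (p : Equiv.Perm (Fin (n+1))) : Equiv.Perm (Fin n) :=
  Equiv.removeNone (((finSuccEquiv n).symm.trans p).trans (finSuccEquiv' (p 0)))

lemma del_succ {n : ℕ} (p : Equiv.Perm (Fin (n+1))) (i : Fin n) :
    p i.succ = (p 0).succAbove (del p i) := by
  have h1 : (((finSuccEquiv n).symm.trans p).trans (finSuccEquiv' (p 0))) (some i)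
      = finSuccEquiv' (p 0) (p i.succ) := by simp
  have hne : finSuccEquiv' (p 0) (p i.succ) ≠ none := by
    rw [← finSuccEquiv'_at (p 0)]
    intro h
    have := (finSuccEquiv' (p 0)).injective h
    have := p.injective this
    exact (Fin.succ_ne_zero i) this
  obtain ⟨j, hj⟩ := Option.ne_none_iff_exists'.mp hne
  have h2 := Equiv.removeNone_some (((finSuccEquiv n).symm.trans p).trans (finSuccEquiv' (p 0)))
    (x := i) ⟨j, by rw [h1, hj]⟩
  rw [h1, hj] at h2
  have : del p i = j := by
    have := h2.symm
    simp only [Option.some.injEq] at this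
    simpa [del] using this.symm
  -- p i.succ = (p 0).succAbove j
  have h3 : p i.succ = (p 0).succAbove j := by
    have := congrArg (finSuccEquiv' (p 0)).symm hj
    simpa [finSuccEquiv'_symm_some] using this
  rw [h3, this]

lemma del_ins {n : ℕ} (a : Fin (n+1)) (σ : Equiv.Perm (Fin n)) : del (ins a σ) = σ := by
  ext i
  have := del_succ (ins a σ) i
  rw [ins_succ, ins_zero] at this
  exact congrArg Fin.val (Fin.succAbove_right_injective (p := a) this.symm)

lemma ins_del {n : ℕ} (p : Equiv.Perm (Fin (n+1))) : ins (p 0) (del p) = p := by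
  ext i
  induction i using Fin.cases with
  | zero => simp
  | succ j => rw [ins_succ, ← del_succ]

lemma val_succAbove' {n:ℕ} (a : Fin (n+1)) (j : Fin n) :
    ((a.succAbove j : Fin (n+1)) : ℕ) = if (j:ℕ) < (a:ℕ) then (j:ℕ) else (j:ℕ)+1 := by
  rcases Fin.lt_or_le (Fin.castSucc j) a with h|h
  · rw [Fin.succAbove_of_castSucc_lt _ _ h, if_pos (by simpa [Fin.lt_iff_val_lt_val] using h),
      Fin.coe_castSucc]
  · rw [Fin.succAbove_of_le_castSucc _ _ h,
      if_neg (by simpa [Fin.le_iff_val_le_val, not_lt] using h), Fin.val_succ]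

lemma sval_nat {N : ℕ} (p : Equiv.Perm (Fin N) × (Fin N → Bool)) (j : ℕ) (h : j < N) :
    sval p ((j:ℤ)+1) = (if p.2 ⟨j,h⟩ then -1 else 1) * (((p.1 ⟨j,h⟩ : Fin N) : ℕ) + 1) := by
  have := sval_coe_succ p ⟨j, h⟩
  simpa using this

def hmap (k : ℕ) (j : ℤ) : ℤ := if (k:ℤ) ≤ j then j + 1 else if j ≤ -(k:ℤ) then j - 1 else j

lemma hmap_lt_hmap {k:ℕ} (hk : 1 ≤ k) {v w : ℤ} : hmap k v < hmap k w ↔ v < w := by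
  unfold hmap; split_ifs <;> omega

def cc (b : Bool) (k : ℕ) (j : ℤ) : ℕ :=
  if (b = false ∧ 0 < j ∧ j < (k:ℤ)) ∨ (b = true ∧ (j ≤ -(k:ℤ) ∨ 0 < j)) then 1 else 0

section main
variable {m k : ℕ} (hk1 : 1 ≤ k) (hk2 : k ≤ m + 1) (b : Bool)
  (σ : Equiv.Perm (Fin (m+1)) × (Fin (m+1) → Bool))

lemma sval_ins_one :
    sval (ins (⟨k-1, by omega⟩ : Fin (m+1+1)) σ.1, Fin.cons b σ.2) (1:ℤ)
      = (if b then -1 else 1) * k := by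
  have := sval_nat (ins (⟨k-1, by omega⟩ : Fin (m+1+1)) σ.1, Fin.cons b σ.2) 0 (by omega)
  norm_num at this
  rw [this]
  cases b <;> simp <;> omega

lemma sval_ins_two (j : ℕ) (hj : j ≤ m) :
    sval (ins (⟨k-1, by omega⟩ : Fin (m+1+1)) σ.1, Fin.cons b σ.2) ((j:ℤ)+2)
      = hmap k (sval σ ((j:ℤ)+1)) := by
  have h1 : (j:ℤ)+2 = ((j+1 : ℕ):ℤ)+1 := by push_cast; ring
  rw [h1, sval_nat _ (j+1) (by omega)]
  have h2 : (⟨j+1, by omega⟩ : Fin (m+1+1)) = (⟨j, by omega⟩ : Fin (m+1)).succ := rfl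
  rw [h2]
  simp only [Fin.cons_succ, ins_succ]
  rw [sval_nat σ j (by omega), val_succAbove']
  have hlt := (σ.1 ⟨j, by omega⟩).isLt
  cases hb : σ.2 ⟨j, by omega⟩ <;> (unfold hmap; simp only [if_true, if_false]; split_ifs <;> push_cast <;> omega)

end main

lemma sval_one_ne {m : ℕ} (σ : Equiv.Perm (Fin (m+1)) × (Fin (m+1) → Bool)) : sval σ 1 ≠ 0 := by
  have := sval_coe_succ σ 0
  norm_num at this
  rw [this]
  split_ifs <;> omega

lemma desB_ins {m k : ℕ} (hk1 : 1 ≤ k) (hk2 : k ≤ m + 1) (b : Bool)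
    (σ : Equiv.Perm (Fin (m+1)) × (Fin (m+1) → Bool)) :
    desB (ins (⟨k-1, by omega⟩ : Fin (m+1+1)) σ.1, Fin.cons b σ.2)
      = desB σ + cc b k (sval σ 1) := by
  set p : Equiv.Perm (Fin (m+1+1)) × (Fin (m+1+1) → Bool) :=
    (ins (⟨k-1, by omega⟩ : Fin (m+1+1)) σ.1, Fin.cons b σ.2) with hp
  have hdp : desB p = ∑ j ∈ Finset.range (m+1+1),
      (if sval p ((j:ℤ)+1) < sval p (j:ℤ) then 1 else 0) := by
    rw [desB, Finset.card_filter,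
      ← Fin.sum_univ_eq_sum_range (fun j : ℕ =>
        if sval p ((j:ℤ)+1) < sval p (j:ℤ) then 1 else 0) (m+1+1)]
  have hds : desB σ = ∑ j ∈ Finset.range (m+1),
      (if sval σ ((j:ℤ)+1) < sval σ (j:ℤ) then 1 else 0) := by
    rw [desB, Finset.card_filter,
      ← Fin.sum_univ_eq_sum_range (fun j : ℕ =>
        if sval σ ((j:ℤ)+1) < sval σ (j:ℤ) then 1 else 0) (m+1)]
  rw [hdp, hds, Finset.sum_range_succ' _ (m+1), Finset.sum_range_succ' _ m,
    Finset.sum_range_succ' _ m]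
  have key : ∀ i ∈ Finset.range m,
      (if sval p (((i+1+1:ℕ):ℤ)+1) < sval p ((i+1+1:ℕ):ℤ) then (1:ℕ) else 0)
        = (if sval σ (((i+1:ℕ):ℤ)+1) < sval σ ((i+1:ℕ):ℤ) then 1 else 0) := by
    intro i hi
    rw [Finset.mem_range] at hi
    have h2 := sval_ins_two hk1 hk2 b σ (i+1) (by omega)
    have h3 := sval_ins_two hk1 hk2 b σ i (by omega)
    rw [← hp] at h2 h3
    have e1 : (((i+1+1:ℕ)):ℤ)+1 = ((i+1:ℕ):ℤ)+2 := by push_cast; ring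
    have e2 : (((i+1+1:ℕ)):ℤ) = ((i:ℕ):ℤ)+2 := by push_cast; ring
    have e3 : (((i+1:ℕ)):ℤ) = ((i:ℕ):ℤ)+1 := by push_cast; ring
    rw [e1, h2, e2, h3, e3]
    simp only [hmap_lt_hmap hk1]
  rw [Finset.sum_congr rfl key]
  -- remaining: boundary terms
  have hone := sval_ins_one hk1 hk2 b σ
  have htwo := sval_ins_two hk1 hk2 b σ 0 (by omega)
  rw [← hp] at hone htwo
  norm_num at htwo
  have hzp : sval p (((0:ℕ)):ℤ) = 0 := sval_zero p
  have hzs : sval σ (((0:ℕ)):ℤ) = 0 := sval_zero σ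
  have hne : sval σ 1 ≠ 0 := sval_one_ne σ
  norm_num [hzp, hzs, hone, htwo]
  unfold cc hmap
  rw [show sval p 0 = 0 from sval_zero p, show sval σ 0 = 0 from sval_zero σ]
  cases b <;> norm_num <;> split_ifs <;> omega

lemma bpoly_step {m k : ℕ} (hk1 : 1 ≤ k) (hk2 : k ≤ m+1) (b : Bool) :
    Bpoly (m+1+1) ((if b then -1 else 1) * k) =
      ∑ σ : Equiv.Perm (Fin (m+1)) × (Fin (m+1) → Bool),
        (Polynomial.X : Polynomial ℚ) ^ (desB σ + cc b k (sval σ 1)) := by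
  rw [Bpoly]
  refine (Finset.sum_bij'
    (fun (σ : Equiv.Perm (Fin (m+1)) × (Fin (m+1) → Bool)) _ =>
      ((ins (⟨k-1, by omega⟩ : Fin (m+1+1)) σ.1, Fin.cons b σ.2) :
        Equiv.Perm (Fin (m+1+1)) × (Fin (m+1+1) → Bool)))
    (fun p _ => (del p.1, fun i => p.2 i.succ)) ?_ ?_ ?_ ?_ ?_).symm
  · intro σ _
    rw [Finset.mem_filter]
    exact ⟨Finset.mem_univ _, sval_ins_one hk1 hk2 b σ⟩
  · intro p _; exact Finset.mem_univ _
  · intro σ _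
    refine Prod.ext ?_ ?_
    · exact del_ins _ _
    · funext i; simp
  · intro p hp
    rw [Finset.mem_filter] at hp
    have hval := sval_coe_succ p 0
    norm_num at hval
    rw [hp.2] at hval
    have hlt := (p.1 0).isLt
    have hb : p.2 0 = b ∧ ((p.1 0 : Fin (m+1+1)) : ℕ) = k - 1 := by
      rcases hbb : p.2 0 <;> rcases hbbb : b <;> rw [hbb] at hval <;> rw [hbbb] at hval <;>
        try norm_num at hval
      all_goals first
        | exact ⟨rfl, by omega⟩
        | (exfalso; omega)
    have ha : (⟨k-1, by omega⟩ : Fin (m+1+1)) = p.1 0 := by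
      ext; exact hb.2.symm
    refine Prod.ext ?_ ?_
    · rw [ha]; exact ins_del p.1
    · funext x
      induction x using Fin.cases with
      | zero => simpa using hb.1.symm
      | succ j => simp
  · intro σ _
    rw [desB_ins hk1 hk2 b σ]

lemma step2 {m k : ℕ} (hk1 : 1 ≤ k) (hk2 : k ≤ m+1) (b : Bool) :
    Bpoly (m+1+1) ((if b then -1 else 1) * k) =
      ∑ j ∈ (Finset.Icc 1 (m+1 : ℤ) ∪ Finset.Icc (-(m+1) : ℤ) (-1)),
        (Polynomial.X : Polynomial ℚ) ^ (cc b k j) * Bpoly (m+1) j := by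
  rw [bpoly_step hk1 hk2 b]
  have hmaps : ∀ σ : Equiv.Perm (Fin (m+1)) × (Fin (m+1) → Bool), σ ∈ Finset.univ →
      sval σ 1 ∈ (Finset.Icc 1 (m+1 : ℤ) ∪ Finset.Icc (-(m+1) : ℤ) (-1)) := by
    intro σ _
    have := sval_coe_succ σ 0
    norm_num at this
    have hlt := (σ.1 0).isLt
    rw [Finset.mem_union, Finset.mem_Icc, Finset.mem_Icc]
    split_ifs at this <;> omega
  rw [← Finset.sum_fiberwise_of_maps_to hmaps]
  refine Finset.sum_congr rfl fun j hj => ?_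
  rw [Bpoly, Finset.mul_sum]
  refine Finset.sum_congr rfl fun σ hσ => ?_
  rw [Finset.mem_filter] at hσ
  rw [pow_add, hσ.2, mul_comm]

lemma cc_false (k:ℕ) (j:ℤ) : cc false k j = if 0 < j ∧ j < (k:ℤ) then 1 else 0 := by
  simp [cc]

lemma cc_true (k:ℕ) (j:ℤ) : cc true k j = if j ≤ -(k:ℤ) ∨ 0 < j then 1 else 0 := by
  simp [cc]

lemma sum_Icc_neg (g : ℤ → Polynomial ℚ) (a b : ℤ) :
    ∑ j ∈ Finset.Icc (-b) (-a), g j = ∑ i ∈ Finset.Icc a b, g (-i) := by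
  refine Finset.sum_nbij' (fun j => -j) (fun i => -i) ?_ ?_ ?_ ?_ ?_ <;>
    intro x hx <;> simp [Finset.mem_Icc] at * <;> try omega

lemma sum_Icc_one_cast (f : ℤ → Polynomial ℚ) (b : ℕ) :
    ∑ j ∈ Finset.Icc (1:ℤ) (b:ℤ), f j = ∑ i ∈ Finset.Icc 1 b, f (i:ℤ) := by
  refine Finset.sum_nbij' (fun j => j.toNat) (fun i => (i:ℤ)) ?_ ?_ ?_ ?_ ?_ <;>
    intro x hx <;> simp [Finset.mem_Icc] at * <;> try omega
  congr 1; omega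

lemma hdisj (m : ℕ) : Disjoint (Finset.Icc 1 (m+1 : ℤ)) (Finset.Icc (-(m+1) : ℤ) (-1)) := by
  rw [Finset.disjoint_left]
  intro x hx hx'
  rw [Finset.mem_Icc] at hx hx'
  omega

/-- For `1 ≤ k ≤ n`:
`B_{n+1,k}(t) = ∑_{i=1}^{n} B_{n,-i}(t) + t·∑_{i=1}^{k-1} B_{n,i}(t) + ∑_{i=k}^{n} B_{n,i}(t)`
and
`B_{n+1,-k}(t) = t·∑_{i=k}^{n} B_{n,-i}(t) + ∑_{i=1}^{k-1} B_{n,-i}(t) + t·∑_{i=1}^{n} B_{n,i}(t)`. -/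
theorem stmt18 (n k : ℕ) (hn : 1 ≤ n) (hk1 : 1 ≤ k) (hk2 : k ≤ n) :
    (Bpoly (n + 1) (k : ℤ) =
      (∑ i ∈ Finset.Icc 1 n, Bpoly n (-(i : ℤ))) +
        Polynomial.X * (∑ i ∈ Finset.Icc 1 (k - 1), Bpoly n (i : ℤ)) +
        ∑ i ∈ Finset.Icc k n, Bpoly n (i : ℤ)) ∧
    (Bpoly (n + 1) (-(k : ℤ)) =
      Polynomial.X * (∑ i ∈ Finset.Icc k n, Bpoly n (-(i : ℤ))) +
        (∑ i ∈ Finset.Icc 1 (k - 1), Bpoly n (-(i : ℤ))) +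
        Polynomial.X * ∑ i ∈ Finset.Icc 1 n, Bpoly n (i : ℤ)) := by
  obtain ⟨m, rfl⟩ : ∃ m, n = m + 1 := ⟨n - 1, by omega⟩
  have ecast : ((m:ℤ)+1) = ((m+1:ℕ):ℤ) := by push_cast; ring
  constructor
  · have h := step2 (m := m) (k := k) hk1 (by omega) false
    rw [if_neg (by simp), one_mul] at h
    rw [h, Finset.sum_union (hdisj m)]
    have neg_eq : ∑ j ∈ Finset.Icc (-(m+1) : ℤ) (-1),
        (Polynomial.X : Polynomial ℚ) ^ (cc false k j) * Bpoly (m+1) j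
        = ∑ i ∈ Finset.Icc 1 (m+1), Bpoly (m+1) (-(i:ℤ)) := by
      rw [sum_Icc_neg, ecast, sum_Icc_one_cast (fun j => _ ^ (cc false k (-j)) * Bpoly (m+1) (-j))]
      refine Finset.sum_congr rfl fun i hi => ?_
      rw [cc_false, if_neg (by omega), pow_zero, one_mul]
    have pos_eq : ∑ j ∈ Finset.Icc (1:ℤ) ((m:ℤ)+1),
        (Polynomial.X : Polynomial ℚ) ^ (cc false k j) * Bpoly (m+1) j
        = Polynomial.X * (∑ i ∈ Finset.Icc 1 (k-1), Bpoly (m+1) (i:ℤ)) +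
          ∑ i ∈ Finset.Icc k (m+1), Bpoly (m+1) (i:ℤ) := by
      rw [ecast, sum_Icc_one_cast (fun j => _ ^ (cc false k j) * Bpoly (m+1) j)]
      have step : ∑ i ∈ Finset.Icc 1 (m+1),
          (Polynomial.X : Polynomial ℚ) ^ (cc false k (i:ℤ)) * Bpoly (m+1) (i:ℤ)
          = ∑ i ∈ Finset.Icc 1 (m+1),
            (if i < k then Polynomial.X * Bpoly (m+1) (i:ℤ) else Bpoly (m+1) (i:ℤ)) := by
        refine Finset.sum_congr rfl fun i hi => ?_
        rw [Finset.mem_Icc] at hi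
        rw [cc_false]
        rcases lt_or_ge i k with hik | hik
        · rw [if_pos (by omega), if_pos hik, pow_one]
        · rw [if_neg (by omega), if_neg (by omega), pow_zero, one_mul]
      have hf1 : Finset.filter (fun x => x < k) (Finset.Icc 1 (m+1)) = Finset.Icc 1 (k-1) := by
        ext x; simp [Finset.mem_Icc, Finset.mem_filter]; omega
      have hf2 : Finset.filter (fun x => ¬ x < k) (Finset.Icc 1 (m+1)) = Finset.Icc k (m+1) := by
        ext x; simp [Finset.mem_Icc, Finset.mem_filter]; omega
      rw [step, Finset.sum_ite, hf1, hf2, ← Finset.mul_sum]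
    rw [neg_eq, pos_eq]
    ring
  · have h := step2 (m := m) (k := k) hk1 (by omega) true
    rw [if_pos rfl, neg_one_mul] at h
    rw [h, Finset.sum_union (hdisj m)]
    have neg_eq : ∑ j ∈ Finset.Icc (-(m+1) : ℤ) (-1),
        (Polynomial.X : Polynomial ℚ) ^ (cc true k j) * Bpoly (m+1) j
        = Polynomial.X * (∑ i ∈ Finset.Icc k (m+1), Bpoly (m+1) (-(i:ℤ))) +
          ∑ i ∈ Finset.Icc 1 (k-1), Bpoly (m+1) (-(i:ℤ)) := by
      rw [sum_Icc_neg, ecast, sum_Icc_one_cast (fun j => _ ^ (cc true k (-j)) * Bpoly (m+1) (-j))]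
      have step : ∑ i ∈ Finset.Icc 1 (m+1),
          (Polynomial.X : Polynomial ℚ) ^ (cc true k (-(i:ℤ))) * Bpoly (m+1) (-(i:ℤ))
          = ∑ i ∈ Finset.Icc 1 (m+1),
            (if k ≤ i then Polynomial.X * Bpoly (m+1) (-(i:ℤ)) else Bpoly (m+1) (-(i:ℤ))) := by
        refine Finset.sum_congr rfl fun i hi => ?_
        rw [Finset.mem_Icc] at hi
        rw [cc_true]
        rcases le_or_gt k i with hik | hik
        · rw [if_pos (by omega), if_pos hik, pow_one]
        · rw [if_neg (by omega), if_neg (by omega), pow_zero, one_mul]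
      have hf1 : Finset.filter (fun x => k ≤ x) (Finset.Icc 1 (m+1)) = Finset.Icc k (m+1) := by
        ext x; simp [Finset.mem_Icc, Finset.mem_filter]; omega
      have hf2 : Finset.filter (fun x => ¬ k ≤ x) (Finset.Icc 1 (m+1)) = Finset.Icc 1 (k-1) := by
        ext x; simp [Finset.mem_Icc, Finset.mem_filter]; omega
      rw [step, Finset.sum_ite, hf1, hf2, ← Finset.mul_sum]
    have pos_eq : ∑ j ∈ Finset.Icc (1:ℤ) ((m:ℤ)+1),
        (Polynomial.X : Polynomial ℚ) ^ (cc true k j) * Bpoly (m+1) j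
        = Polynomial.X * ∑ i ∈ Finset.Icc 1 (m+1), Bpoly (m+1) (i:ℤ) := by
      rw [ecast, sum_Icc_one_cast (fun j => _ ^ (cc true k j) * Bpoly (m+1) j), Finset.mul_sum]
      refine Finset.sum_congr rfl fun i hi => ?_
      rw [Finset.mem_Icc] at hi
      rw [cc_true, if_pos (by omega), pow_one]
    rw [neg_eq, pos_eq]
    ring
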